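/- Let p ≥ 2 and q ∈ [0,1]. The randomized mechanism on (ℝ², d_p) that runs Minimum Bounding Box with probability 1−q and the coordinate-wise median with probability q achieves expected maximum cost at most (1 + q + (1−q)·min(2^{1/p}, η))·r on any instance whose smallest enclosing d_p-ball has radius r and whose prediction error is at most η. -/

import Mathlib

open Finset

/-- The l_p distance on ℝ², for a real exponent p. -/
noncomputable def dp (p : ℝ) (x y : ℝ × ℝ) : ℝ :=
  (|x.1 - y.1| ^ p + |x.2 - y.2| ^ p) ^ (1/p)

/-- The Minimum Bounding Box mechanism: clamp each coordinate of the prediction to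
the corresponding coordinate range of the agents. -/
noncomputable def bbox {n : ℕ} (x : Fin (n+1) → ℝ × ℝ) (π : ℝ × ℝ) : ℝ × ℝ :=
  (max (univ.inf' univ_nonempty fun i => (x i).1)
      (min (univ.sup' univ_nonempty fun i => (x i).1) π.1),
   max (univ.inf' univ_nonempty fun i => (x i).2)
      (min (univ.sup' univ_nonempty fun i => (x i).2) π.2))

/-- The (lower) median of a tuple of reals. -/
noncomputable def medF {n : ℕ} (s : Fin (n+1) → ℝ) : ℝ :=
  (Multiset.sort (Multiset.ofList (List.ofFn s)) (· ≤ ·)).getD (n / 2) 0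

/-- The coordinate-wise median point of a profile in ℝ². -/
noncomputable def cmF {n : ℕ} (x : Fin (n+1) → ℝ × ℝ) : ℝ × ℝ :=
  (medF (fun i => (x i).1), medF (fun i => (x i).2))

/-- The maximum cost of a point y in the l_p plane. -/
noncomputable def MC2 {n : ℕ} (p : ℝ) (x : Fin (n+1) → ℝ × ℝ) (y : ℝ × ℝ) : ℝ :=
  univ.sup' univ_nonempty fun i => dp p (x i) y

/-! ### auxiliary lemmas -/

section Aux
variable {p : ℝ}

lemma aux_rpow_inv_self {a : ℝ} (ha : 0 ≤ a) (hp : p ≠ 0) : (a ^ p) ^ (1/p) = a := by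
  rw [← Real.rpow_mul ha, mul_one_div, div_self hp, Real.rpow_one]

lemma dp_symm (x y : ℝ × ℝ) : dp p x y = dp p y x := by
  simp [dp, abs_sub_comm]

lemma coord1_le_dp (hp : 1 ≤ p) (x y : ℝ × ℝ) : |x.1 - y.1| ≤ dp p x y := by
  have hp0 : (0:ℝ) < p := lt_of_lt_of_le one_pos hp
  calc |x.1 - y.1| = (|x.1 - y.1| ^ p) ^ (1/p) := (aux_rpow_inv_self (abs_nonneg _) hp0.ne').symm
    _ ≤ dp p x y := Real.rpow_le_rpow (by positivity)
        (le_add_of_nonneg_right (by positivity)) (by positivity)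

lemma coord2_le_dp (hp : 1 ≤ p) (x y : ℝ × ℝ) : |x.2 - y.2| ≤ dp p x y := by
  have hp0 : (0:ℝ) < p := lt_of_lt_of_le one_pos hp
  calc |x.2 - y.2| = (|x.2 - y.2| ^ p) ^ (1/p) := (aux_rpow_inv_self (abs_nonneg _) hp0.ne').symm
    _ ≤ dp p x y := Real.rpow_le_rpow (by positivity)
        (le_add_of_nonneg_left (by positivity)) (by positivity)

lemma dp_triangle (hp : 1 ≤ p) (x y z : ℝ × ℝ) : dp p x z ≤ dp p x y + dp p y z := by
  have := Real.Lp_add_le (univ : Finset (Fin 2))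
    (fun i => if i = 0 then x.1 - y.1 else x.2 - y.2)
    (fun i => if i = 0 then y.1 - z.1 else y.2 - z.2) hp
  simp only [Fin.sum_univ_two] at this
  norm_num at this
  convert this using 2 <;> simp [dp]

lemma dp_le_rpow (hp : 1 ≤ p) {x y : ℝ × ℝ} {a b : ℝ}
    (ha : |x.1 - y.1| ≤ a) (hb : |x.2 - y.2| ≤ b) :
    dp p x y ≤ (a ^ p + b ^ p) ^ (1/p) := by
  have hp0 : 0 ≤ p := le_trans zero_le_one hp
  exact Real.rpow_le_rpow (by positivity)
    (add_le_add (Real.rpow_le_rpow (abs_nonneg _) ha hp0)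
      (Real.rpow_le_rpow (abs_nonneg _) hb hp0)) (by positivity)

lemma two_rpow_calc (hp : 1 ≤ p) {r : ℝ} (hr : 0 ≤ r) :
    ((r:ℝ) ^ p + r ^ p) ^ (1/p) = 2 ^ (1/p) * r := by
  have hp0 : p ≠ 0 := by positivity
  rw [← two_mul, Real.mul_rpow (by norm_num) (by positivity),
    ← Real.rpow_mul hr, mul_one_div, div_self hp0, Real.rpow_one]

lemma clamp_lipschitz (l h a b : ℝ) :
    |max l (min h a) - max l (min h b)| ≤ |a - b| := by
  calc |max l (min h a) - max l (min h b)|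
      = |max (min h a) l - max (min h b) l| := by rw [max_comm l, max_comm l]
    _ ≤ |min h a - min h b| := abs_max_sub_max_le_abs _ _ _
    _ ≤ max |h - h| |a - b| := abs_min_sub_min_le_max _ _ _ _
    _ = |a - b| := by simp

lemma clamp_closer {l h a b : ℝ} (hal : l ≤ a) (hah : a ≤ h) :
    |a - max l (min h b)| ≤ |a - b| := by
  rcases le_total b l with hb | hb
  · rw [min_eq_right (le_trans hb (le_trans hal hah)), max_eq_left hb]
    rw [abs_of_nonneg (by linarith), abs_of_nonneg (by linarith)]; linarith
  · rcases le_total h b with hb2 | hb2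
    · rw [min_eq_left hb2, max_eq_right (le_trans hal hah)]
      rw [abs_of_nonpos (by linarith), abs_of_nonpos (by linarith)]; linarith
    · rw [min_eq_right hb2, max_eq_right hb]

lemma interval_dist {l h a c : ℝ} (hla : l ≤ a) (hah : a ≤ h) {r : ℝ}
    (hl : |l - c| ≤ r) (hh : |h - c| ≤ r) : |a - c| ≤ r := by
  rw [abs_le] at *; constructor <;> linarith [hl.1, hl.2, hh.1, hh.2]

end Aux

/-! ### median counting -/

lemma sorted_countP_le {l : List ℝ} (hl : l.Pairwise (· ≤ ·)) {k : ℕ} (hk : k < l.length) :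
    k + 1 ≤ l.countP (fun a => decide (a ≤ l[k])) := by
  have key : ∀ i (hi : i < l.length), i ≤ k → l[i] ≤ l[k] := by
    intro i hi hik
    rcases eq_or_lt_of_le hik with h | h
    · subst h; exact le_refl _
    · exact List.pairwise_iff_getElem.mp hl i k hi hk h
  have h2 := List.countP_append (p := fun a => decide (a ≤ l[k])) (l₁ := l.take (k+1)) (l₂ := l.drop (k+1))
  rw [List.take_append_drop] at h2
  have h3 : (l.take (k+1)).countP (fun a => decide (a ≤ l[k])) = (l.take (k+1)).length := by
    rw [List.countP_eq_length]
    intro a ha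
    rw [List.mem_iff_getElem] at ha
    obtain ⟨i, hi, rfl⟩ := ha
    have hi' : i < l.length := lt_of_lt_of_le hi (by simp)
    rw [List.getElem_take]
    simp only [decide_eq_true_eq]
    exact key i hi' (by simp at hi; omega)
  have h4 : (l.take (k+1)).length = k + 1 := by rw [List.length_take]; omega
  omega

lemma sorted_countP_ge {l : List ℝ} (hl : l.Pairwise (· ≤ ·)) {k : ℕ} (hk : k < l.length) :
    l.length - k ≤ l.countP (fun a => decide (l[k] ≤ a)) := by
  have key : ∀ i (hi : i < l.length), k ≤ i → l[k] ≤ l[i] := by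
    intro i hi hik
    rcases eq_or_lt_of_le hik with h | h
    · subst h; exact le_refl _
    · exact List.pairwise_iff_getElem.mp hl k i hk hi h
  have h2 := List.countP_append (p := fun a => decide (l[k] ≤ a)) (l₁ := l.take k) (l₂ := l.drop k)
  rw [List.take_append_drop] at h2
  have h3 : (l.drop k).countP (fun a => decide (l[k] ≤ a)) = (l.drop k).length := by
    rw [List.countP_eq_length]
    intro a ha
    rw [List.mem_iff_getElem] at ha
    obtain ⟨i, hi, rfl⟩ := ha
    rw [List.getElem_drop]
    simp only [decide_eq_true_eq]
    exact key (k+i) (by simp at hi; omega) (by omega)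
  have h4 : (l.drop k).length = l.length - k := by simp
  omega

section Med
variable {n : ℕ} (s : Fin (n+1) → ℝ)

lemma card_filter_countP (P : ℝ → Prop) [DecidablePred P] :
    (univ.filter (fun j => P (s j))).card
      = (Multiset.sort (Multiset.ofList (List.ofFn s)) (· ≤ ·)).countP
          (fun a => decide (P a)) := by
  have h0 : (Multiset.ofList (List.ofFn s)) = Multiset.map s (univ.val) := by
    rw [List.ofFn_eq_map, Fin.univ_def]; rfl
  have h1 : (univ.filter (fun j => P (s j))).card
      = Multiset.countP (fun a => P a) (Multiset.map s univ.val) := by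
    rw [Multiset.countP_map, Finset.card_filter]
    simp [Multiset.countP_eq_card_filter]; rfl
  rw [h1, ← h0]
  conv_lhs => rw [← Multiset.sort_eq (s := Multiset.ofList (List.ofFn s)) (r := (· ≤ ·))]
  rw [Multiset.coe_countP]

lemma medF_lt_length : n / 2 < (Multiset.sort (Multiset.ofList (List.ofFn s)) (· ≤ ·)).length := by
  rw [Multiset.length_sort]; simp [Multiset.coe_card]; omega

lemma medF_getElem : medF s
    = (Multiset.sort (Multiset.ofList (List.ofFn s)) (· ≤ ·))[n/2]'(medF_lt_length s) := by
  rw [medF, List.getD_eq_getElem]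

lemma medF_count_le : n / 2 + 1 ≤ (univ.filter (fun j => s j ≤ medF s)).card := by
  have hcp := card_filter_countP s (fun a => a ≤ medF s)
  beta_reduce at hcp
  rw [hcp, medF_getElem]
  exact sorted_countP_le (Multiset.pairwise_sort (s := _) (r := _)) (medF_lt_length s)

lemma medF_count_ge : (n + 1) - n / 2 ≤ (univ.filter (fun j => medF s ≤ s j)).card := by
  have hcp := card_filter_countP s (fun a => medF s ≤ a)
  beta_reduce at hcp
  rw [hcp, medF_getElem]
  have := sorted_countP_ge (Multiset.pairwise_sort (r := (· ≤ ·))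
    (s := Multiset.ofList (List.ofFn s))) (medF_lt_length s)
  have hl2 : (Multiset.sort (Multiset.ofList (List.ofFn s)) (· ≤ ·)).length = n + 1 := by
    rw [Multiset.length_sort]; simp [Multiset.coe_card]
  omega

end Med

lemma between_abs {a m b : ℝ} (h : a ≤ m ∧ m ≤ b ∨ b ≤ m ∧ m ≤ a) : |a - m| ≤ |a - b| := by
  rcases h with ⟨h1, h2⟩ | ⟨h1, h2⟩
  · rw [abs_of_nonpos (by linarith), abs_of_nonpos (by linarith)]; linarith
  · rw [abs_of_nonneg (by linarith), abs_of_nonneg (by linarith)]; linarith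

lemma exists_opposite {n : ℕ} (s t : Fin (n+1) → ℝ) (i : Fin (n+1)) :
    ∃ j, |s i - (medF s)| ≤ |s i - s j| ∧ |t i - (medF t)| ≤ |t i - t j| := by
  rcases le_or_gt (s i) (medF s) with hs | hs <;> rcases le_or_gt (t i) (medF t) with ht | ht
  · obtain ⟨j, hj⟩ : ((univ.filter (fun j => (medF s) ≤ s j)) ∩ (univ.filter (fun j => (medF t) ≤ t j))).Nonempty := by
      rw [← Finset.card_pos]
      have hu := Finset.card_union_add_card_inter
        (univ.filter (fun j => (medF s) ≤ s j)) (univ.filter (fun j => (medF t) ≤ t j))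
      have h1 := medF_count_ge s
      have h2 := medF_count_ge t
      have h3 : ((univ.filter (fun j => (medF s) ≤ s j)) ∪ (univ.filter (fun j => (medF t) ≤ t j))).card ≤ n + 1 := by
        refine le_trans (Finset.card_le_card (Finset.subset_univ _)) (by simp)
      omega
    simp only [Finset.mem_inter, Finset.mem_filter] at hj
    exact ⟨j, between_abs (Or.inl ⟨hs, hj.1.2⟩), between_abs (Or.inl ⟨ht, hj.2.2⟩)⟩
  · obtain ⟨j, hj⟩ : ((univ.filter (fun j => (medF s) ≤ s j)) ∩ (univ.filter (fun j => t j ≤ (medF t)))).Nonempty := by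
      rw [← Finset.card_pos]
      have hu := Finset.card_union_add_card_inter
        (univ.filter (fun j => (medF s) ≤ s j)) (univ.filter (fun j => t j ≤ (medF t)))
      have h1 := medF_count_ge s
      have h2 := medF_count_le t
      have h3 : ((univ.filter (fun j => (medF s) ≤ s j)) ∪ (univ.filter (fun j => t j ≤ (medF t)))).card ≤ n + 1 := by
        refine le_trans (Finset.card_le_card (Finset.subset_univ _)) (by simp)
      omega
    simp only [Finset.mem_inter, Finset.mem_filter] at hj
    exact ⟨j, between_abs (Or.inl ⟨hs, hj.1.2⟩), between_abs (Or.inr ⟨hj.2.2, le_of_lt ht⟩)⟩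
  · obtain ⟨j, hj⟩ : ((univ.filter (fun j => s j ≤ (medF s))) ∩ (univ.filter (fun j => (medF t) ≤ t j))).Nonempty := by
      rw [← Finset.card_pos]
      have hu := Finset.card_union_add_card_inter
        (univ.filter (fun j => s j ≤ (medF s))) (univ.filter (fun j => (medF t) ≤ t j))
      have h1 := medF_count_le s
      have h2 := medF_count_ge t
      have h3 : ((univ.filter (fun j => s j ≤ (medF s))) ∪ (univ.filter (fun j => (medF t) ≤ t j))).card ≤ n + 1 := by
        refine le_trans (Finset.card_le_card (Finset.subset_univ _)) (by simp)
      omega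
    simp only [Finset.mem_inter, Finset.mem_filter] at hj
    exact ⟨j, between_abs (Or.inr ⟨hj.1.2, le_of_lt hs⟩), between_abs (Or.inl ⟨ht, hj.2.2⟩)⟩
  · obtain ⟨j, hj⟩ : ((univ.filter (fun j => s j ≤ (medF s))) ∩ (univ.filter (fun j => t j ≤ (medF t)))).Nonempty := by
      rw [← Finset.card_pos]
      have hu := Finset.card_union_add_card_inter
        (univ.filter (fun j => s j ≤ (medF s))) (univ.filter (fun j => t j ≤ (medF t)))
      have h1 := medF_count_le s
      have h2 := medF_count_le t
      have h3 : ((univ.filter (fun j => s j ≤ (medF s))) ∪ (univ.filter (fun j => t j ≤ (medF t)))).card ≤ n := by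
        have hsub : ((univ.filter (fun j => s j ≤ (medF s))) ∪ (univ.filter (fun j => t j ≤ (medF t))))
            ⊆ univ.erase i := by
          intro j hjm
          simp only [Finset.mem_union, Finset.mem_filter] at hjm
          rw [Finset.mem_erase]
          refine ⟨?_, Finset.mem_univ _⟩
          rintro rfl
          rcases hjm with h | h
          · exact absurd h.2 (not_le.mpr hs)
          · exact absurd h.2 (not_le.mpr ht)
        refine le_trans (Finset.card_le_card hsub) ?_
        rw [Finset.card_erase_of_mem (Finset.mem_univ _)]
        simp
      omega
    simp only [Finset.mem_inter, Finset.mem_filter] at hj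
    exact ⟨j, between_abs (Or.inr ⟨hj.1.2, le_of_lt hs⟩), between_abs (Or.inr ⟨hj.2.2, le_of_lt ht⟩)⟩

/-- The mixture of Minimum Bounding Box (probability 1−q) and the coordinate-wise
median (probability q) has expected maximum cost at most
(1 + q + (1−q)·min(2^{1/p}, η))·r, where r is the radius of the smallest enclosing
d_p-ball and η bounds the prediction error. -/
theorem stmt15 {n : ℕ} (p q r η : ℝ) (hp : 2 ≤ p) (hq0 : 0 ≤ q) (hq1 : q ≤ 1)
    (hr : 0 < r) (x : Fin (n+1) → ℝ × ℝ) (o π : ℝ × ℝ)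
    (hball : ∀ i, dp p (x i) o ≤ r)
    (hmin : ∀ (o' : ℝ × ℝ) (r' : ℝ), (∀ i, dp p (x i) o' ≤ r') → r ≤ r')
    (herr : dp p π o ≤ η * r) :
    (1 - q) * MC2 p x (bbox x π) + q * MC2 p x (cmF x)
      ≤ (1 + q + (1 - q) * min ((2:ℝ) ^ (1/p)) η) * r := by
  have hp1 : (1:ℝ) ≤ p := le_trans one_le_two hp
  -- median bound: MC2 p x (cmF x) ≤ 2 * r
  have hmed : MC2 p x (cmF x) ≤ 2 * r := by
    rw [MC2, Finset.sup'_le_iff]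
    intro i _
    obtain ⟨j, hj1, hj2⟩ := exists_opposite (fun i => (x i).1) (fun i => (x i).2) i
    calc dp p (x i) (cmF x) ≤ dp p (x i) (x j) := dp_le_rpow hp1 hj1 hj2
      _ ≤ dp p (x i) o + dp p o (x j) := dp_triangle hp1 _ _ _
      _ ≤ r + r := add_le_add (hball i) (by rw [dp_symm]; exact hball j)
      _ = 2 * r := by ring
  -- bounding box bound
  set lo1 := univ.inf' univ_nonempty fun i => (x i).1 with hlo1
  set hi1 := univ.sup' univ_nonempty fun i => (x i).1 with hhi1
  set lo2 := univ.inf' univ_nonempty fun i => (x i).2 with hlo2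
  set hi2 := univ.sup' univ_nonempty fun i => (x i).2 with hhi2
  have hx1 : ∀ i, lo1 ≤ (x i).1 ∧ (x i).1 ≤ hi1 := fun i =>
    ⟨Finset.inf'_le (fun i => (x i).1) (Finset.mem_univ i),
      Finset.le_sup' (fun i => (x i).1) (Finset.mem_univ i)⟩
  have hx2 : ∀ i, lo2 ≤ (x i).2 ∧ (x i).2 ≤ hi2 := fun i =>
    ⟨Finset.inf'_le (fun i => (x i).2) (Finset.mem_univ i),
      Finset.le_sup' (fun i => (x i).2) (Finset.mem_univ i)⟩
  have hle1 : lo1 ≤ hi1 := le_trans (hx1 0).1 (hx1 0).2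
  have hle2 : lo2 ≤ hi2 := le_trans (hx2 0).1 (hx2 0).2
  have hy : bbox x π = (max lo1 (min hi1 π.1), max lo2 (min hi2 π.2)) := rfl
  -- endpoint distances to o
  have hlo1o : |lo1 - o.1| ≤ r := by
    obtain ⟨j, _, hj⟩ := Finset.exists_mem_eq_inf' (univ_nonempty) (fun i => (x i).1)
    rw [hlo1, hj]
    exact le_trans (coord1_le_dp hp1 (x j) o) (hball j)
  have hhi1o : |hi1 - o.1| ≤ r := by
    obtain ⟨j, _, hj⟩ := Finset.exists_mem_eq_sup' (univ_nonempty) (fun i => (x i).1)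
    rw [hhi1, hj]
    exact le_trans (coord1_le_dp hp1 (x j) o) (hball j)
  have hlo2o : |lo2 - o.2| ≤ r := by
    obtain ⟨j, _, hj⟩ := Finset.exists_mem_eq_inf' (univ_nonempty) (fun i => (x i).2)
    rw [hlo2, hj]
    exact le_trans (coord2_le_dp hp1 (x j) o) (hball j)
  have hhi2o : |hi2 - o.2| ≤ r := by
    obtain ⟨j, _, hj⟩ := Finset.exists_mem_eq_sup' (univ_nonempty) (fun i => (x i).2)
    rw [hhi2, hj]
    exact le_trans (coord2_le_dp hp1 (x j) o) (hball j)
  -- bound 1 : via o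
  have hb1 : dp p o (bbox x π) ≤ 2 ^ (1/p) * r := by
    have h1 : |o.1 - (bbox x π).1| ≤ r := by
      rw [hy, abs_sub_comm]
      exact interval_dist (le_max_left _ _) (max_le hle1 (min_le_left _ _)) hlo1o hhi1o
    have h2 : |o.2 - (bbox x π).2| ≤ r := by
      rw [hy, abs_sub_comm]
      exact interval_dist (le_max_left _ _) (max_le hle2 (min_le_left _ _)) hlo2o hhi2o
    calc dp p o (bbox x π) ≤ (r ^ p + r ^ p) ^ (1/p) := dp_le_rpow hp1 h1 h2
      _ = 2 ^ (1/p) * r := two_rpow_calc hp1 hr.le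
  -- bound 2 : via the clamped optimal center
  set o'' : ℝ × ℝ := (max lo1 (min hi1 o.1), max lo2 (min hi2 o.2)) with ho''
  have hxo'' : ∀ i, dp p (x i) o'' ≤ r := by
    intro i
    calc dp p (x i) o''
        ≤ (|(x i).1 - o.1| ^ p + |(x i).2 - o.2| ^ p) ^ (1/p) :=
          dp_le_rpow hp1 (clamp_closer (hx1 i).1 (hx1 i).2) (clamp_closer (hx2 i).1 (hx2 i).2)
      _ = dp p (x i) o := rfl
      _ ≤ r := hball i
  have hb2 : dp p o'' (bbox x π) ≤ η * r := by
    calc dp p o'' (bbox x π)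
        ≤ (|o.1 - π.1| ^ p + |o.2 - π.2| ^ p) ^ (1/p) := by
          rw [hy, ho'']
          exact dp_le_rpow hp1 (clamp_lipschitz _ _ _ _) (clamp_lipschitz _ _ _ _)
      _ = dp p o π := rfl
      _ = dp p π o := dp_symm _ _
      _ ≤ η * r := herr
  -- combine into the bbox bound
  have hbb : MC2 p x (bbox x π) ≤ (1 + min ((2:ℝ) ^ (1/p)) η) * r := by
    rw [MC2, Finset.sup'_le_iff]
    intro i _
    have d1 : dp p (x i) (bbox x π) ≤ r + 2 ^ (1/p) * r :=
      le_trans (dp_triangle hp1 _ o _) (add_le_add (hball i) hb1)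
    have d2 : dp p (x i) (bbox x π) ≤ r + η * r :=
      le_trans (dp_triangle hp1 _ o'' _) (add_le_add (hxo'' i) hb2)
    have : (1 + min ((2:ℝ) ^ (1/p)) η) * r = min (r + 2 ^ (1/p) * r) (r + η * r) := by
      rw [min_add_add_left, add_mul, one_mul, min_mul_of_nonneg _ _ hr.le]
    rw [this]
    exact le_min d1 d2
  -- final arithmetic
  have e : (1-q) * ((1 + min ((2:ℝ) ^ (1/p)) η) * r) + q * (2 * r)
      = (1 + q + (1-q) * min ((2:ℝ) ^ (1/p)) η) * r := by ring
  have f1 : (1-q) * MC2 p x (bbox x π) ≤ (1-q) * ((1 + min ((2:ℝ) ^ (1/p)) η) * r) :=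
    mul_le_mul_of_nonneg_left hbb (by linarith)
  have f2 : q * MC2 p x (cmF x) ≤ q * (2 * r) :=
    mul_le_mul_of_nonneg_left hmed hq0
  linarith
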